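/- Let A be a semilocal Dedekind domain with maximal ideals 𝔪₁,…,𝔪ᵣ, s ∈ 𝔪₁⋯𝔪ᵣ nonzero, K the fraction field of A, and 𝒱 a set of normalized discrete valuations on K containing none of the valuations attached to the 𝔪ᵢ. Let n ≥ 2 and let f, g ∈ Qₙ(A,𝒱,s) with top coefficients a, b ∈ A^× and degrees Nᵢ = deg_{tᵢ} f, Mᵢ = deg_{tᵢ} g; set mᵢ := Nᵢ − Mᵢ. For j ∈ {1,…,n}, let f_{j,1} := f(t₁,…,t_{j−1},1,t_{j+1},…,tₙ) and let f_{j,∞} be the leading coefficient of f with respect to tⱼ, i.e., the polynomial in the remaining variables whose coefficients are those of tⱼ^{Nⱼ} in f; define g_{j,1} and g_{j,∞} analogously (using Mⱼ). Suppose that for every pair (j,ε) with ε = ∞ and j ∈ {1,…,n}, or ε = 1 and j ∈ {2,…,n}, there exist a unit c ∈ A^× and monomials μ, ν (products of powers of t₁,…,tₙ) such that ν·f_{j,ε} = c·μ·g_{j,ε} in A[t₁,…,tₙ]. Then for every such pair (j,ε) one has the identity b·(∏_{i≠j, mᵢ<0} tᵢ^{−mᵢ})·f_{j,ε} = a·(∏_{i≠j,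 mᵢ>0} tᵢ^{mᵢ})·g_{j,ε} in A[t₁,…,tₙ] (equivalently f_{j,ε}/g_{j,ε} = (a/b)·∏_{i≠j} tᵢ^{mᵢ} in the fraction field). Furthermore, if in addition there exist monomials μ, ν with ν·f_{1,1} = μ·g_{1,1}, then the same identity also holds for the pair (j,ε) = (1,1). -/

import Mathlib

/-!
Each face `f_{j,ε}` has a corner exponent, `(Nᵢ)_{i ≠ j}` with `Nⱼ` replaced by `0`, that
dominates its support. Comparing corner terms in `ν·f_{j,ε} = c·μ·g_{j,ε}` forces
`ν - μ = (Mᵢ - Nᵢ)_{i ≠ j}` and `c = α / β`, where `α`, `β` are the corner coefficients;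
the monomials then cancel, so it suffices to know `b α = a β`.
At `ε = ∞` the corner coefficients are `a` and `b`. At `ε = 1` the corner coefficient of
`f_{j,1}` is the sum of the coefficients of `f` along the `tⱼ`-edge ending at the top;
by (Q1) all but the top one are divisible by `s`, which lies in the Jacobson radical, so it
is a unit by (Q2). Substituting `tⱼ = 1` into the identity already known for a face `(i, ∞)`
with `i ≠ j` (which exists since `n ≥ 2`) and comparing corner coefficients gives `b α = a β`.
-/

open MvPolynomial

/-- The multi-index `(N₁, …, Nₙ)` of the top coefficient of `f`, where
`Nⱼ = deg_{tⱼ} f`. -/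
noncomputable def topDeg {A : Type*} [CommSemiring A] {σ : Type*} [Fintype σ]
    (f : MvPolynomial σ A) : σ →₀ ℕ :=
  Finsupp.equivFunOnFinite.symm fun j => degreeOf j f

/-- Membership in `Qₙ(A, 𝒱, s)`: `f` is nonzero and satisfies (Q1), (Q2), (Q2.5), (Q3). -/
def memQ {A : Type*} [CommRing A] [IsDomain A] {K : Type*} [Field K] [Algebra A K]
    [IsFractionRing A K] (𝒱 : Set (Valuation K (WithZero (Multiplicative ℤ)))) (s : A)
    {n : ℕ} (f : MvPolynomial (Fin n) A) : Prop :=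
  f ≠ 0 ∧
  (∀ d : Fin n →₀ ℕ, s ^ (Finset.univ.sup fun j => degreeOf j f - d j) ∣ coeff d f) ∧
  IsUnit (coeff (topDeg f) f) ∧
  (∀ v ∈ 𝒱, ∀ d : Fin n →₀ ℕ,
    v (algebraMap A K (coeff d f)) ≤ v (algebraMap A K (coeff (topDeg f) f))) ∧
  (∀ j : Fin n,
    MvPolynomial.eval₂ (MvPolynomial.C : A →+* MvPolynomial (Fin n) A)
      (fun i => if i = j then 0 else X i) f ≠ 0)

/-- `f_{j,1}`: the polynomial obtained from `f` by substituting `1` for the variable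
`tⱼ`. -/
noncomputable def substOne {A : Type*} [CommRing A] {n : ℕ} (j : Fin n)
    (f : MvPolynomial (Fin n) A) : MvPolynomial (Fin n) A :=
  MvPolynomial.eval₂ (MvPolynomial.C : A →+* MvPolynomial (Fin n) A)
    (fun i => if i = j then 1 else X i) f

/-- `f_{j,∞}`: the leading coefficient of `f` with respect to `tⱼ`, i.e. the polynomial
in the remaining variables whose coefficients are the coefficients of `tⱼ^{Nⱼ}` in `f`
(`Nⱼ = deg_{tⱼ} f`). -/
noncomputable def lcoeff {A : Type*} [CommRing A] {n : ℕ} (j : Fin n)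
    (f : MvPolynomial (Fin n) A) : MvPolynomial (Fin n) A :=
  ∑ d ∈ f.support.filter (fun d => d j = degreeOf j f),
    monomial (Finsupp.update d j 0) (coeff d f)

/-- The face `f_{j,ε}`: for `e = true` (the face `ε = ∞`) the leading coefficient with
respect to `tⱼ`, for `e = false` (the face `ε = 1`, i.e. `1 + 0`) the substitution
`tⱼ = 1`. -/
noncomputable def face {A : Type*} [CommRing A] {n : ℕ} (j : Fin n) (e : Bool)
    (f : MvPolynomial (Fin n) A) : MvPolynomial (Fin n) A :=
  if e then lcoeff j f else substOne j f

namespace Finsupp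

variable {σ : Type*}

theorem eq_update_of_update_eq_update {d T : σ →₀ ℕ} {j : σ}
    (h : d.update j 0 = T.update j 0) : d = T.update j (d j) := by
  rw [← Finsupp.update_idem T j 0, ← h, Finsupp.update_idem, Finsupp.update_self]

theorem update_le_update {d T : σ →₀ ℕ} (h : d ≤ T) (j : σ) (k : ℕ) :
    d.update j k ≤ T.update j k := by
  classical
  intro l
  simp only [Finsupp.update_apply]
  split_ifs
  exacts [le_rfl, h l]

end Finsupp

namespace MvPolynomial

variable {σ R : Type*} [CommSemiring R]

theorem prod_X_pow_eq_monomial_sum (S : Finset σ) (k : σ → ℕ) :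
    ∏ i ∈ S, (X i : MvPolynomial σ R) ^ k i =
      monomial (∑ i ∈ S, Finsupp.single i (k i)) 1 := by
  simp only [X_pow_eq_monomial, monomial_sum_one]

theorem le_add_of_mem_support_monomial_mul {F : MvPolynomial σ R} {T ν d : σ →₀ ℕ} {c : R}
    (hF : ∀ e ∈ F.support, e ≤ T) (hd : d ∈ (monomial ν c * F).support) : d ≤ ν + T := by
  classical
  rw [mem_support_iff, coeff_monomial_mul'] at hd
  split_ifs at hd
  · exact tsub_le_iff_left.mp (hF _ (mem_support_iff.mpr (right_ne_zero_of_mul hd)))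
  · exact absurd rfl hd

theorem add_eq_and_coeff_eq_of_monomial_mul_eq {F G : MvPolynomial σ R}
    {TF TG ν μ : σ →₀ ℕ} {c₁ c₂ : R}
    (hF : ∀ d ∈ F.support, d ≤ TF) (hG : ∀ d ∈ G.support, d ≤ TG)
    (hF0 : c₁ * coeff TF F ≠ 0) (hG0 : c₂ * coeff TG G ≠ 0)
    (h : monomial ν c₁ * F = monomial μ c₂ * G) :
    ν + TF = μ + TG ∧ c₁ * coeff TF F = c₂ * coeff TG G := by
  have hcF : coeff (ν + TF) (monomial ν c₁ * F) = c₁ * coeff TF F :=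
    coeff_monomial_mul _ _ _ _
  have hcG : coeff (μ + TG) (monomial μ c₂ * G) = c₂ * coeff TG G :=
    coeff_monomial_mul _ _ _ _
  have hTF : ν + TF ∈ (monomial μ c₂ * G).support := by
    rw [← h, mem_support_iff, hcF]; exact hF0
  have hTG : μ + TG ∈ (monomial ν c₁ * F).support := by
    rw [h, mem_support_iff, hcG]; exact hG0
  have hT : ν + TF = μ + TG :=
    (le_add_of_mem_support_monomial_mul hG hTF).antisymm
      (le_add_of_mem_support_monomial_mul hF hTG)
  exact ⟨hT, by rw [← hcF, h, hT, hcG]⟩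

theorem C_mul_monomial_mul_eq_of_add_eq {R : Type*} [CommRing R] [IsDomain R]
    {F G : MvPolynomial σ R} {ν μ p q : σ →₀ ℕ} {a b c : R}
    (h : monomial ν 1 * F = C c * monomial μ 1 * G) (hexp : ν + p = μ + q) (hbc : b * c = a) :
    C b * monomial q 1 * F = C a * monomial p 1 * G := by
  refine mul_left_cancel₀ (monomial_eq_zero.not.mpr one_ne_zero : monomial ν (1 : R) ≠ 0) ?_
  calc monomial ν 1 * (C b * monomial q 1 * F)
      = C b * monomial q 1 * (monomial ν 1 * F) := by ring
    _ = C (b * c) * monomial (μ + q) 1 * G := by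
        rw [h, C_mul, ← mul_one (1 : R), ← monomial_mul, mul_one]; ring
    _ = monomial ν 1 * (C a * monomial p 1 * G) := by
        rw [hbc, ← hexp, ← mul_one (1 : R), ← monomial_mul, mul_one]; ring

end MvPolynomial

theorem isUnit_add_mul_of_forall_mem_maximal {A : Type*} [CommRing A] {u s : A} (hu : IsUnit u)
    (hs : ∀ M : Ideal A, M.IsMaximal → s ∈ M) (t : A) : IsUnit (u + s * t) := by
  by_contra h
  obtain ⟨M, hM, hut⟩ := exists_max_ideal_of_mem_nonunits h
  have hu' : u ∈ M := by simpa using M.sub_mem hut (M.mul_mem_right t (hs M hM))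
  exact hM.ne_top (M.eq_top_of_isUnit_mem hu' hu)

section Faces

variable {A : Type*} [CommRing A] {n : ℕ} {j : Fin n}

@[simp]
theorem topDeg_apply (f : MvPolynomial (Fin n) A) (l : Fin n) : topDeg f l = degreeOf l f := rfl

theorem le_topDeg {f : MvPolynomial (Fin n) A} {d : Fin n →₀ ℕ} (hd : d ∈ f.support) :
    d ≤ topDeg f :=
  fun l => monomial_le_degreeOf l hd

theorem coeff_sum_monomial_update_zero (F : MvPolynomial (Fin n) A) (S : Finset (Fin n →₀ ℕ))
    (e : Fin n →₀ ℕ) :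
    coeff e (∑ d ∈ S, monomial (d.update j 0) (coeff d F)) =
      ∑ d ∈ S with d.update j 0 = e, coeff d F := by
  classical
  simp only [coeff_sum, coeff_monomial, Finset.sum_filter]

theorem le_update_zero_of_mem_support_sum_monomial {F : MvPolynomial (Fin n) A}
    {S : Finset (Fin n →₀ ℕ)} {T e : Fin n →₀ ℕ} (hS : ∀ d ∈ S, d ≤ T)
    (he : e ∈ (∑ d ∈ S, monomial (d.update j 0) (coeff d F)).support) : e ≤ T.update j 0 := by
  rw [mem_support_iff, coeff_sum_monomial_update_zero] at he
  obtain ⟨d, hd, -⟩ := Finset.exists_ne_zero_of_sum_ne_zero he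
  rw [Finset.mem_filter] at hd
  exact hd.2 ▸ Finsupp.update_le_update (hS d hd.1) j 0

theorem substOne_monomial (w : Fin n →₀ ℕ) (c : A) :
    substOne j (monomial w c) = monomial (w.update j 0) c := by
  classical
  rw [substOne, eval₂_monomial, monomial_eq, Finsupp.prod_fintype _ _ (by simp),
    Finsupp.prod_fintype _ _ (by simp)]
  congr 1
  refine Finset.prod_congr rfl fun i _ => ?_
  by_cases hi : i = j <;> simp [hi, Finsupp.update_apply]

theorem substOne_mul (p q : MvPolynomial (Fin n) A) :
    substOne j (p * q) = substOne j p * substOne j q :=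
  eval₂_mul _ _

theorem substOne_eq_sum (F : MvPolynomial (Fin n) A) :
    substOne j F = ∑ d ∈ F.support, monomial (d.update j 0) (coeff d F) := by
  conv_lhs => rw [F.as_sum]
  simp only [substOne, eval₂_sum]
  exact Finset.sum_congr rfl fun d _ => substOne_monomial d (coeff d F)

theorem le_update_zero_of_mem_support_substOne {F : MvPolynomial (Fin n) A} {T e : Fin n →₀ ℕ}
    (hF : ∀ d ∈ F.support, d ≤ T) (he : e ∈ (substOne j F).support) : e ≤ T.update j 0 := by
  rw [substOne_eq_sum] at he
  exact le_update_zero_of_mem_support_sum_monomial hF he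

theorem le_update_zero_of_mem_support_lcoeff {f : MvPolynomial (Fin n) A} {e : Fin n →₀ ℕ}
    (he : e ∈ (lcoeff j f).support) : e ≤ (topDeg f).update j 0 :=
  le_update_zero_of_mem_support_sum_monomial
    (fun _ hd => le_topDeg (Finset.mem_filter.mp hd).1) he

theorem coeff_update_zero_substOne {F : MvPolynomial (Fin n) A} {T : Fin n →₀ ℕ}
    (hF : ∀ d ∈ F.support, d ≤ T) :
    coeff (T.update j 0) (substOne j F) =
      ∑ k ∈ Finset.range (T j + 1), coeff (T.update j k) F := by
  rw [substOne_eq_sum, coeff_sum_monomial_update_zero]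
  refine Finset.sum_bij_ne_zero (fun d _ _ => d j) (fun d hd _ => ?_)
    (fun d hd _ d' hd' _ hdd' => ?_) (fun k _ hk => ⟨T.update j k, ?_, hk, by simp⟩)
    (fun d hd _ => ?_)
  · exact Finset.mem_range.mpr (Nat.lt_succ_of_le (hF d (Finset.mem_filter.mp hd).1 j))
  · rw [Finsupp.eq_update_of_update_eq_update (Finset.mem_filter.mp hd).2,
      Finsupp.eq_update_of_update_eq_update (Finset.mem_filter.mp hd').2, hdd']
  · exact Finset.mem_filter.mpr ⟨mem_support_iff.mpr hk, by simp⟩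
  · conv_lhs => rw [Finsupp.eq_update_of_update_eq_update (Finset.mem_filter.mp hd).2]

theorem coeff_lcoeff_of_apply_eq_zero (f : MvPolynomial (Fin n) A) {e : Fin n →₀ ℕ}
    (he : e j = 0) : coeff e (lcoeff j f) = coeff (e.update j (degreeOf j f)) f := by
  have he' : e.update j 0 = e := he ▸ Finsupp.update_self e j
  rw [_root_.lcoeff, coeff_sum_monomial_update_zero, Finset.filter_filter]
  refine Finset.sum_eq_single _ (fun d hd hne => absurd ?_ hne) (fun hnot => ?_)
  · obtain ⟨-, hdj, hde⟩ := Finset.mem_filter.mp hd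
    rw [Finsupp.eq_update_of_update_eq_update (hde.trans he'.symm), hdj]
  · refine notMem_support_iff.mp fun hmem => hnot (Finset.mem_filter.mpr ⟨hmem, ?_, ?_⟩)
    · simp
    · simpa using he'

theorem coeff_topDeg_lcoeff (f : MvPolynomial (Fin n) A) :
    coeff ((topDeg f).update j 0) (lcoeff j f) = coeff (topDeg f) f := by
  rw [coeff_lcoeff_of_apply_eq_zero f (by simp), Finsupp.update_idem, ← topDeg_apply,
    Finsupp.update_self]

end Faces

section Corners

variable {A : Type*} [CommRing A] {n : ℕ}

theorem isUnit_coeff_topDeg_substOne {s : A} (hs : ∀ M : Ideal A, M.IsMaximal → s ∈ M)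
    {f : MvPolynomial (Fin n) A}
    (hQ1 : ∀ d : Fin n →₀ ℕ, s ^ (Finset.univ.sup fun l => degreeOf l f - d l) ∣ coeff d f)
    (hQ2 : IsUnit (coeff (topDeg f) f)) (j : Fin n) :
    IsUnit (coeff ((topDeg f).update j 0) (substOne j f)) := by
  rw [coeff_update_zero_substOne fun _ => le_topDeg, Finset.sum_range_succ,
    Finsupp.update_self]
  obtain ⟨t, ht⟩ : s ∣ ∑ k ∈ Finset.range (topDeg f j), coeff ((topDeg f).update j k) f := by
    refine Finset.dvd_sum fun k hk => (dvd_pow_self s ?_).trans (hQ1 _)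
    have hj := Finset.le_sup (f := fun l => degreeOf l f - (topDeg f).update j k l)
      (Finset.mem_univ j)
    simp only [Finsupp.update_apply, ↓reduceIte] at hj ⊢
    have := Finset.mem_range.mp hk
    simp only [topDeg_apply] at this
    omega
  rw [ht, add_comm]
  exact isUnit_add_mul_of_forall_mem_maximal hQ2 hs t

theorem coeff_topDeg_substOne_lcoeff {i j : Fin n} (hij : i ≠ j) (f : MvPolynomial (Fin n) A) :
    coeff (((topDeg f).update i 0).update j 0) (substOne j (lcoeff i f)) =
      coeff ((topDeg f).update j 0) (substOne j f) := by
  rw [coeff_update_zero_substOne fun _ => le_update_zero_of_mem_support_lcoeff,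
    coeff_update_zero_substOne fun _ => le_topDeg]
  refine Finset.sum_congr (by simp [Finsupp.update_apply, hij.symm]) fun k _ => ?_
  rw [coeff_lcoeff_of_apply_eq_zero f (by simp [Finsupp.update_apply, hij])]
  congr 1
  ext l
  by_cases hli : l = i <;> by_cases hlj : l = j <;> simp_all [Finsupp.update_apply]

theorem mul_coeff_topDeg_substOne_eq [IsDomain A] {f g : MvPolynomial (Fin n) A} {a b : A}
    {p q : Fin n →₀ ℕ} {i j : Fin n} (hij : i ≠ j) (ha : a ≠ 0) (hb : b ≠ 0)
    (hf : coeff ((topDeg f).update j 0) (substOne j f) ≠ 0)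
    (hg : coeff ((topDeg g).update j 0) (substOne j g) ≠ 0)
    (h : C b * monomial q 1 * lcoeff i f = C a * monomial p 1 * lcoeff i g) :
    b * coeff ((topDeg f).update j 0) (substOne j f) =
      a * coeff ((topDeg g).update j 0) (substOne j g) := by
  have H := congrArg (substOne j) h
  simp only [substOne_mul, substOne_monomial, C_mul_monomial, mul_one] at H
  rw [← coeff_topDeg_substOne_lcoeff hij f] at hf ⊢
  rw [← coeff_topDeg_substOne_lcoeff hij g] at hg ⊢
  have hcorner {φ : MvPolynomial (Fin n) A} :
      ∀ d ∈ (substOne j (lcoeff i φ)).support, d ≤ ((topDeg φ).update i 0).update j 0 :=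
    fun _ => le_update_zero_of_mem_support_substOne fun _ => le_update_zero_of_mem_support_lcoeff
  exact (add_eq_and_coeff_eq_of_monomial_mul_eq hcorner hcorner
    (mul_ne_zero hb hf) (mul_ne_zero ha hg) H).2

/-- `F / G = (a / b) · ∏_{i ≠ j} tᵢ ^ mᵢ`, with denominators cleared. -/
def FaceRatio (m : Fin n → ℤ) (j : Fin n) (a b : A) (F G : MvPolynomial (Fin n) A) : Prop :=
  C b * (∏ i ∈ Finset.univ.filter (fun i => i ≠ j ∧ m i < 0), X i ^ (-(m i)).toNat) * F =
    C a * (∏ i ∈ Finset.univ.filter (fun i => i ≠ j ∧ 0 < m i), X i ^ (m i).toNat) * G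

theorem faceRatio_of_monomial_mul_eq [IsDomain A] {F G : MvPolynomial (Fin n) A}
    {TF TG ν μ : Fin n →₀ ℕ} {a b c : A} {m : Fin n → ℤ} {j : Fin n}
    (hF : ∀ d ∈ F.support, d ≤ TF) (hG : ∀ d ∈ G.support, d ≤ TG) (hTF : TF j = 0)
    (hTG : TG j = 0) (hm : ∀ l ≠ j, m l = TF l - TG l) (hF0 : coeff TF F ≠ 0)
    (hG0 : coeff TG G ≠ 0) (hab : b * coeff TF F = a * coeff TG G) (hc : c ≠ 0)
    (h : monomial ν 1 * F = C c * monomial μ 1 * G) : FaceRatio m j a b F G := by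
  have h' := h
  rw [C_mul_monomial, mul_one] at h'
  obtain ⟨hexp, hcoeff⟩ := add_eq_and_coeff_eq_of_monomial_mul_eq hF hG
    (by rwa [one_mul]) (mul_ne_zero hc hG0) h'
  have hbc : b * c = a := mul_right_cancel₀ hG0 (by rw [mul_assoc, ← hcoeff, one_mul, hab])
  rw [FaceRatio, prod_X_pow_eq_monomial_sum, prod_X_pow_eq_monomial_sum]
  refine C_mul_monomial_mul_eq_of_add_eq h ?_ hbc
  ext l
  have hl := DFunLike.congr_fun hexp l
  simp only [Finsupp.add_apply, Finsupp.finsetSum_apply, Finsupp.single_apply,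
    Finset.sum_ite_eq', Finset.mem_filter, Finset.mem_univ, true_and] at hl ⊢
  by_cases hlj : l = j
  · subst hlj
    simp_all
  · have := hm l hlj
    split_ifs <;> omega

end Corners

theorem stmt_9_general {A : Type*} [CommRing A] [IsDedekindDomain A]
    {K : Type*} [Field K] [Algebra A K] [IsFractionRing A K]
    (𝒱 : Set (Valuation K (WithZero (Multiplicative ℤ))))
    (s : A) (hs : ∀ m : Ideal A, m.IsMaximal → s ∈ m)
    {n : ℕ} (hn : 2 ≤ n)
    (f g : MvPolynomial (Fin n) A) (hf : memQ 𝒱 s f) (hg : memQ 𝒱 s g)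
    (a b : A) (ha : a = coeff (topDeg f) f) (hb : b = coeff (topDeg g) g)
    (m : Fin n → ℤ) (hm : ∀ i, m i = (degreeOf i f : ℤ) - (degreeOf i g : ℤ))
    (hβ : ∀ (j : Fin n) (e : Bool), (e = true ∨ (j : ℕ) ≠ 0) →
      ∃ (c : Aˣ) (μ ν : Fin n →₀ ℕ),
        (monomial ν (1 : A)) * face j e f = C (c : A) * (monomial μ (1 : A)) * face j e g) :
    (∀ (j : Fin n) (e : Bool), (e = true ∨ (j : ℕ) ≠ 0) →
      C b * (∏ i ∈ Finset.univ.filter (fun i => i ≠ j ∧ m i < 0), X i ^ (-(m i)).toNat) *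
          face j e f =
        C a * (∏ i ∈ Finset.univ.filter (fun i => i ≠ j ∧ 0 < m i), X i ^ (m i).toNat) *
          face j e g) ∧
    (∀ j : Fin n, (j : ℕ) = 0 →
      (∃ μ ν : Fin n →₀ ℕ,
        (monomial ν (1 : A)) * face j false f = (monomial μ (1 : A)) * face j false g) →
      C b * (∏ i ∈ Finset.univ.filter (fun i => i ≠ j ∧ m i < 0), X i ^ (-(m i)).toNat) *
          face j false f =
        C a * (∏ i ∈ Finset.univ.filter (fun i => i ≠ j ∧ 0 < m i), X i ^ (m i).toNat) *
          face j false g) := by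
  obtain ⟨-, hfQ1, hfQ2, -, -⟩ := hf
  obtain ⟨-, hgQ1, hgQ2, -, -⟩ := hg
  have hmj : ∀ j, ∀ l ≠ j, m l = (topDeg f).update j 0 l - (topDeg g).update j 0 l :=
    fun j l hl => by simp [Finsupp.update_apply, hl, hm l]
  have hinf : ∀ j, FaceRatio m j a b (lcoeff j f) (lcoeff j g) := fun j => by
    obtain ⟨c, μ, ν, h⟩ := hβ j true (.inl rfl)
    exact faceRatio_of_monomial_mul_eq (fun _ => le_update_zero_of_mem_support_lcoeff)
      (fun _ => le_update_zero_of_mem_support_lcoeff) (by simp) (by simp) (hmj j)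
      (by rw [coeff_topDeg_lcoeff]; exact hfQ2.ne_zero)
      (by rw [coeff_topDeg_lcoeff]; exact hgQ2.ne_zero)
      (by rw [coeff_topDeg_lcoeff, coeff_topDeg_lcoeff, ← ha, ← hb, mul_comm]) c.ne_zero h
  have hone : ∀ j (c : A), c ≠ 0 → (∃ μ ν : Fin n →₀ ℕ,
      monomial ν (1 : A) * substOne j f = C c * monomial μ 1 * substOne j g) →
      FaceRatio m j a b (substOne j f) (substOne j g) := by
    rintro j c hc ⟨μ, ν, h⟩
    obtain ⟨i, hij⟩ := Fintype.exists_ne_of_one_lt_card (by rw [Fintype.card_fin]; exact hn) j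
    have hfu := (isUnit_coeff_topDeg_substOne hs hfQ1 hfQ2 j).ne_zero
    have hgu := (isUnit_coeff_topDeg_substOne hs hgQ1 hgQ2 j).ne_zero
    exact faceRatio_of_monomial_mul_eq
      (fun _ => le_update_zero_of_mem_support_substOne fun _ => le_topDeg)
      (fun _ => le_update_zero_of_mem_support_substOne fun _ => le_topDeg) (by simp) (by simp)
      (hmj j) hfu hgu
      (mul_coeff_topDeg_substOne_eq hij (ha ▸ hfQ2.ne_zero) (hb ▸ hgQ2.ne_zero) hfu hgu
        (by simpa only [FaceRatio, prod_X_pow_eq_monomial_sum] using hinf i)) hc h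
  refine ⟨fun j e he => ?_,
    fun j _ ⟨μ, ν, h⟩ => hone j 1 one_ne_zero ⟨μ, ν, by rwa [C_1, one_mul]⟩⟩
  cases e
  · obtain ⟨c, μ, ν, h⟩ := hβ j false he
    exact hone j c c.ne_zero ⟨μ, ν, h⟩
  · exact hinf j

/-- Lemma 5.12.  Let `A` be a semilocal Dedekind domain, `s`, `𝒱` as
usual, `n ≥ 2`, and `f, g ∈ Qₙ(A,𝒱,s)` with top coefficients `a, b ∈ A^×` and degrees
`Nᵢ = deg_{tᵢ} f`, `Mᵢ = deg_{tᵢ} g`; set `mᵢ = Nᵢ − Mᵢ ∈ ℤ`.  Suppose that for every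
pair `(j, ε)` with `ε = ∞`, `j ∈ {1,…,n}`, or `ε = 1`, `j ∈ {2,…,n}`, there are a unit
`c ∈ A^×` and monomials `μ, ν` with `ν·f_{j,ε} = c·μ·g_{j,ε}`.  Then for every such pair
`b·(∏_{i≠j, mᵢ<0} tᵢ^{−mᵢ})·f_{j,ε} = a·(∏_{i≠j, mᵢ>0} tᵢ^{mᵢ})·g_{j,ε}`.
If moreover there are monomials `μ, ν` with `ν·f_{1,1} = μ·g_{1,1}`, then the same
identity also holds for `(j, ε) = (1, 1)`. -/
theorem stmt_9 {A : Type*} [CommRing A] [IsDedekindDomain A] (hA : ¬ IsField A)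
    (hfin : {I : Ideal A | I.IsMaximal}.Finite)
    {K : Type*} [Field K] [Algebra A K] [IsFractionRing A K]
    (𝒱 : Set (Valuation K (WithZero (Multiplicative ℤ))))
    (hnorm : ∀ v ∈ 𝒱, Function.Surjective v)
    (hnot : ∀ v ∈ 𝒱, ∀ P : IsDedekindDomain.HeightOneSpectrum A,
      v ≠ P.valuation (K := K))
    (s : A) (hs0 : s ≠ 0) (hs : ∀ m : Ideal A, m.IsMaximal → s ∈ m)
    {n : ℕ} (hn : 2 ≤ n)
    (f g : MvPolynomial (Fin n) A) (hf : memQ 𝒱 s f) (hg : memQ 𝒱 s g)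
    (a b : A) (ha : a = coeff (topDeg f) f) (hb : b = coeff (topDeg g) g)
    (m : Fin n → ℤ) (hm : ∀ i, m i = (degreeOf i f : ℤ) - (degreeOf i g : ℤ))
    (hβ : ∀ (j : Fin n) (e : Bool), (e = true ∨ (j : ℕ) ≠ 0) →
      ∃ (c : Aˣ) (μ ν : Fin n →₀ ℕ),
        (monomial ν (1 : A)) * face j e f = C (c : A) * (monomial μ (1 : A)) * face j e g) :
    (∀ (j : Fin n) (e : Bool), (e = true ∨ (j : ℕ) ≠ 0) →
      C b * (∏ i ∈ Finset.univ.filter (fun i => i ≠ j ∧ m i < 0), X i ^ (-(m i)).toNat) *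
          face j e f =
        C a * (∏ i ∈ Finset.univ.filter (fun i => i ≠ j ∧ 0 < m i), X i ^ (m i).toNat) *
          face j e g) ∧
    (∀ j : Fin n, (j : ℕ) = 0 →
      (∃ μ ν : Fin n →₀ ℕ,
        (monomial ν (1 : A)) * face j false f = (monomial μ (1 : A)) * face j false g) →
      C b * (∏ i ∈ Finset.univ.filter (fun i => i ≠ j ∧ m i < 0), X i ^ (-(m i)).toNat) *
          face j false f =
        C a * (∏ i ∈ Finset.univ.filter (fun i => i ≠ j ∧ 0 < m i), X i ^ (m i).toNat) *
          face j false g) :=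
  stmt_9_general 𝒱 s hs hn f g hf hg a b ha hb m hm hβ
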